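/- Let (I⁺, I⁻) be a pair ideal of (A⁺, A⁻) = (eRg, gRe) and let h = (h⁺, h⁻) be a pair homomorphism from (I⁺, I⁻) into (A⁺, A⁻). Then there exists a unique R-bimodule map F : S → R on the two-sided ideal S of R generated by I⁺ ∪ I⁻ such that F restricted to I⁺ equals h⁺ and F restricted to I⁻ equals h⁻. (This is the key step in showing that the extended centroid of a semiprime associative pair is isomorphic to the extended centroid of its standard imbedding.) -/
import Mathlib


/-- The Peirce space `eRg` (`g = 1 - e`), i.e. `A⁺` of the associative pair `(eRg, gRe)`. -/
def peirceP {R : Type*} [Ring R] (e : R) : Set R := {x | e * x * (1 - e) = x}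

/-- The Peirce space `gRe` (`g = 1 - e`), i.e. `A⁻` of the associative pair `(eRg, gRe)`. -/
def peirceM {R : Type*} [Ring R] (e : R) : Set R := {x | (1 - e) * x * e = x}

/-- A pair ideal `(I⁺, I⁻)` of the associative pair `(A⁺, A⁻) = (eRg, gRe)`. -/
def IsPairIdeal (Φ : Type*) {R : Type*} [CommRing Φ] [Ring R] [Algebra Φ R]
    (e : R) (Ip Im : Submodule Φ R) : Prop :=
  (Ip : Set R) ⊆ peirceP e ∧ (Im : Set R) ⊆ peirceM e ∧
  (∀ x ∈ peirceP e, ∀ y ∈ peirceM e, ∀ z ∈ Ip, x * y * z ∈ Ip) ∧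
  (∀ z ∈ Ip, ∀ y ∈ peirceM e, ∀ x ∈ peirceP e, z * y * x ∈ Ip) ∧
  (∀ x ∈ peirceP e, ∀ u ∈ Im, ∀ z ∈ peirceP e, x * u * z ∈ Ip) ∧
  (∀ x ∈ peirceM e, ∀ y ∈ peirceP e, ∀ u ∈ Im, x * y * u ∈ Im) ∧
  (∀ u ∈ Im, ∀ y ∈ peirceP e, ∀ x ∈ peirceM e, u * y * x ∈ Im) ∧
  (∀ x ∈ peirceM e, ∀ z ∈ Ip, ∀ y ∈ peirceM e, x * z * y ∈ Im)

/-- A pair homomorphism `h = (h⁺, h⁻)` from a pair ideal `(I⁺, I⁻)` into the associative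
pair `(A⁺, A⁻) = (eRg, gRe)`: a pair of `Φ`-linear maps (encoded as functions `R → R` whose
properties are required only on `I⁺` resp. `I⁻`) mapping `I⁺ → A⁺`, `I⁻ → A⁻` and commuting
with all multiplication operators of the pair. -/
def IsPairHom (Φ : Type*) {R : Type*} [CommRing Φ] [Ring R] [Algebra Φ R]
    (e : R) (Ip Im : Submodule Φ R) (hp hm : R → R) : Prop :=
  (∀ y ∈ Ip, hp y ∈ peirceP e) ∧ (∀ u ∈ Im, hm u ∈ peirceM e) ∧
  (∀ y ∈ Ip, ∀ z ∈ Ip, hp (y + z) = hp y + hp z) ∧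
  (∀ c : Φ, ∀ y ∈ Ip, hp (c • y) = c • hp y) ∧
  (∀ u ∈ Im, ∀ v ∈ Im, hm (u + v) = hm u + hm v) ∧
  (∀ c : Φ, ∀ u ∈ Im, hm (c • u) = c • hm u) ∧
  (∀ x ∈ peirceP e, ∀ u ∈ Im, ∀ z ∈ peirceP e, hp (x * u * z) = x * hm u * z) ∧
  (∀ y ∈ Ip, ∀ w ∈ peirceM e, ∀ z ∈ peirceP e, hp (y * w * z) = hp y * w * z) ∧
  (∀ x ∈ peirceP e, ∀ w ∈ peirceM e, ∀ y ∈ Ip, hp (x * w * y) = x * w * hp y) ∧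
  (∀ x ∈ peirceM e, ∀ y ∈ Ip, ∀ z ∈ peirceM e, hm (x * y * z) = x * hp y * z) ∧
  (∀ u ∈ Im, ∀ w ∈ peirceP e, ∀ z ∈ peirceM e, hm (u * w * z) = hm u * w * z) ∧
  (∀ x ∈ peirceM e, ∀ w ∈ peirceP e, ∀ u ∈ Im, hm (x * w * u) = x * w * hm u)

section StmtAux
variable {R : Type*} [Ring R] {e : R}

lemma aux_eg (he : e * e = e) : e * (1 - e) = 0 := by
  rw [mul_sub, mul_one, he, sub_self]

lemma aux_ge (he : e * e = e) : (1 - e) * e = 0 := by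
  rw [sub_mul, one_mul, he, sub_self]

lemma aux_gg (he : e * e = e) : (1 - e) * (1 - e) = (1 - e) := by
  rw [mul_sub, mul_one, aux_ge he, sub_zero]

lemma auxP_em (he : e * e = e) {p : R} (h : p ∈ peirceP e) : e * p = p := by
  conv_lhs => rw [← h]
  rw [← mul_assoc, ← mul_assoc, he, h]

lemma auxP_mg (he : e * e = e) {p : R} (h : p ∈ peirceP e) : p * (1 - e) = p := by
  conv_lhs => rw [← h]
  rw [mul_assoc, aux_gg he, h]

lemma auxP_me (he : e * e = e) {p : R} (h : p ∈ peirceP e) : p * e = 0 := by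
  conv_lhs => rw [← h]
  rw [mul_assoc, aux_ge he, mul_zero]

lemma auxP_gm (he : e * e = e) {p : R} (h : p ∈ peirceP e) : (1 - e) * p = 0 := by
  conv_lhs => rw [← h]
  rw [← mul_assoc, ← mul_assoc, aux_ge he, zero_mul, zero_mul]

lemma auxM_gm (he : e * e = e) {w : R} (h : w ∈ peirceM e) : (1 - e) * w = w := by
  conv_lhs => rw [← h]
  rw [← mul_assoc, ← mul_assoc, aux_gg he, h]

lemma auxM_me (he : e * e = e) {w : R} (h : w ∈ peirceM e) : w * e = w := by
  conv_lhs => rw [← h]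
  rw [mul_assoc, he, h]

lemma auxM_em (he : e * e = e) {w : R} (h : w ∈ peirceM e) : e * w = 0 := by
  conv_lhs => rw [← h]
  rw [← mul_assoc, ← mul_assoc, aux_eg he, zero_mul, zero_mul]

lemma auxM_mg (he : e * e = e) {w : R} (h : w ∈ peirceM e) : w * (1 - e) = 0 := by
  conv_lhs => rw [← h]
  rw [mul_assoc, aux_eg he, mul_zero]

lemma auxPP (he : e * e = e) {p p' : R} (h : p ∈ peirceP e) (h' : p' ∈ peirceP e) :
    p * p' = 0 := by
  rw [← auxP_em he h', ← mul_assoc, auxP_me he h, zero_mul]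

lemma auxMM (he : e * e = e) {w w' : R} (h : w ∈ peirceM e) (h' : w' ∈ peirceM e) :
    w * w' = 0 := by
  rw [← auxM_gm he h', ← mul_assoc, auxM_mg he h, zero_mul]

lemma memP_erg (he : e * e = e) (r : R) : e * r * (1 - e) ∈ peirceP e := by
  show e * (e * r * (1 - e)) * (1 - e) = e * r * (1 - e)
  rw [← mul_assoc, ← mul_assoc, he, mul_assoc, aux_gg he]

lemma memM_gre (he : e * e = e) (r : R) : (1 - e) * r * e ∈ peirceM e := by
  show (1 - e) * ((1 - e) * r * e) * e = (1 - e) * r * e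
  rw [← mul_assoc, ← mul_assoc, aux_gg he, mul_assoc, he]

lemma aux_ee (he : e * e = e) (r : R) : e * (e * r * e) * e = e * r * e := by
  rw [← mul_assoc, ← mul_assoc, he, mul_assoc, he]

lemma aux_gg' (he : e * e = e) (r : R) :
    (1 - e) * ((1 - e) * r * (1 - e)) * (1 - e) = (1 - e) * r * (1 - e) := by
  rw [← mul_assoc, ← mul_assoc, aux_gg he, mul_assoc, aux_gg he]

end StmtAux



/-- Let `Φ` be a commutative unital ring and `R` a unital `Φ`-algebra tightly
generated by the associative pair `(A⁺, A⁻) = (eRg, gRe)` and satisfying the semiprime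
corner-faithfulness conditions (the setting of the standard imbedding of a semiprime
associative pair).  Every pair homomorphism `h = (h⁺, h⁻)` from a pair ideal `(I⁺, I⁻)` into
`(A⁺, A⁻)` extends to a unique `R`-bimodule map `F` on the two-sided ideal `S` of `R`
generated by `I⁺ ∪ I⁻`, with `F = h⁺` on `I⁺` and `F = h⁻` on `I⁻`. -/
theorem stmt_9 (Φ : Type*) {R : Type*} [CommRing Φ] [Ring R] [Algebra Φ R]
    (e : R) (he : e * e = e)
    (htight_e : {x : R | e * x * e = x} =
      ↑(Submodule.span Φ (insert e {z : R | ∃ p ∈ peirceP e, ∃ q ∈ peirceM e, z = p * q})))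
    (htight_g : {x : R | (1 - e) * x * (1 - e) = x} =
      ↑(Submodule.span Φ
        (insert (1 - e) {z : R | ∃ p ∈ peirceM e, ∃ q ∈ peirceP e, z = p * q})))
    (hcorner_e : ∀ x : R, e * x * e = x → (∀ r ∈ peirceP e, x * r = 0) → x = 0)
    (hcorner_g : ∀ x : R, (1 - e) * x * (1 - e) = x → (∀ r ∈ peirceM e, x * r = 0) → x = 0)
    (Ip Im : Submodule Φ R) (hPI : IsPairIdeal Φ e Ip Im)
    (hp hm : R → R) (hhom : IsPairHom Φ e Ip Im hp hm) :
    let S := TwoSidedIdeal.span ((Ip : Set R) ∪ (Im : Set R))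
    (∃ F : R → R,
      (∀ x ∈ S, ∀ y ∈ S, F (x + y) = F x + F y) ∧
      (∀ r : R, ∀ x ∈ S, F (r * x) = r * F x) ∧
      (∀ r : R, ∀ x ∈ S, F (x * r) = F x * r) ∧
      (∀ y ∈ Ip, F y = hp y) ∧ (∀ u ∈ Im, F u = hm u)) ∧
    (∀ F₁ F₂ : R → R,
      ((∀ x ∈ S, ∀ y ∈ S, F₁ (x + y) = F₁ x + F₁ y) ∧
       (∀ r : R, ∀ x ∈ S, F₁ (r * x) = r * F₁ x) ∧
       (∀ r : R, ∀ x ∈ S, F₁ (x * r) = F₁ x * r) ∧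
       (∀ y ∈ Ip, F₁ y = hp y) ∧ (∀ u ∈ Im, F₁ u = hm u)) →
      ((∀ x ∈ S, ∀ y ∈ S, F₂ (x + y) = F₂ x + F₂ y) ∧
       (∀ r : R, ∀ x ∈ S, F₂ (r * x) = r * F₂ x) ∧
       (∀ r : R, ∀ x ∈ S, F₂ (x * r) = F₂ x * r) ∧
       (∀ y ∈ Ip, F₂ y = hp y) ∧ (∀ u ∈ Im, F₂ u = hm u)) →
      ∀ x ∈ S, F₁ x = F₂ x) := by
  classical
  intro S
  obtain ⟨hIpP, hImM, hc3, hc4, hc5, hc6, hc7, hc8⟩ := hPI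
  obtain ⟨hhpP, hhmM, hpadd, hpsmul, hmadd, hmsmul, hh7, hh8, hh9, hh10, hh11, hh12⟩ := hhom
  have hp0 : hp 0 = 0 := by
    have := hpsmul 0 0 Ip.zero_mem
    simpa using this
  have hm0 : hm 0 = 0 := by
    have := hmsmul 0 0 Im.zero_mem
    simpa using this
  -- the graph of the desired map, as a submodule of R × R
  set Gen : Set (R × R) :=
    {v | ∃ y ∈ Ip, v = (y, hp y)} ∪ {v | ∃ u ∈ Im, v = (u, hm u)} ∪
    {v | ∃ y ∈ Ip, ∃ w ∈ peirceM e, v = (y * w, hp y * w)} ∪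
    {v | ∃ p ∈ peirceP e, ∃ u ∈ Im, v = (p * u, p * hm u)} ∪
    {v | ∃ u ∈ Im, ∃ p ∈ peirceP e, v = (u * p, hm u * p)} ∪
    {v | ∃ w ∈ peirceM e, ∃ y ∈ Ip, v = (w * y, w * hp y)} with hGenDef
  set M : Submodule Φ (R × R) := Submodule.span Φ Gen with hMdef
  have hG1 : ∀ y ∈ Ip, ((y, hp y) : R × R) ∈ M := fun y hy =>
    Submodule.subset_span (by
      simp only [hGenDef, Set.mem_union, Set.mem_setOf_eq]
      exact Or.inl <| Or.inl <| Or.inl <| Or.inl <| Or.inl ⟨y, hy, rfl⟩)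
  have hG2 : ∀ u ∈ Im, ((u, hm u) : R × R) ∈ M := fun u hu =>
    Submodule.subset_span (by
      simp only [hGenDef, Set.mem_union, Set.mem_setOf_eq]
      exact Or.inl <| Or.inl <| Or.inl <| Or.inl <| Or.inr ⟨u, hu, rfl⟩)
  have hG3 : ∀ y ∈ Ip, ∀ w ∈ peirceM e, ((y * w, hp y * w) : R × R) ∈ M := fun y hy w hw =>
    Submodule.subset_span (by
      simp only [hGenDef, Set.mem_union, Set.mem_setOf_eq]
      exact Or.inl <| Or.inl <| Or.inl <| Or.inr ⟨y, hy, w, hw, rfl⟩)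
  have hG4 : ∀ p ∈ peirceP e, ∀ u ∈ Im, ((p * u, p * hm u) : R × R) ∈ M := fun p hpm u hu =>
    Submodule.subset_span (by
      simp only [hGenDef, Set.mem_union, Set.mem_setOf_eq]
      exact Or.inl <| Or.inl <| Or.inr ⟨p, hpm, u, hu, rfl⟩)
  have hG5 : ∀ u ∈ Im, ∀ p ∈ peirceP e, ((u * p, hm u * p) : R × R) ∈ M := fun u hu p hpm =>
    Submodule.subset_span (by
      simp only [hGenDef, Set.mem_union, Set.mem_setOf_eq]
      exact Or.inl <| Or.inr ⟨u, hu, p, hpm, rfl⟩)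
  have hG6 : ∀ w ∈ peirceM e, ∀ y ∈ Ip, ((w * y, w * hp y) : R × R) ∈ M := fun w hw y hy =>
    Submodule.subset_span (by
      simp only [hGenDef, Set.mem_union, Set.mem_setOf_eq]
      exact Or.inr ⟨w, hw, y, hy, rfl⟩)
  -- left multiplication driver
  have keyL : ∀ r : R, (∀ v ∈ Gen, ((r * v.1, r * v.2) : R × R) ∈ M) →
      ∀ v ∈ M, ((r * v.1, r * v.2) : R × R) ∈ M := by
    intro r hr v hv
    rw [hMdef] at hv
    induction hv using Submodule.span_induction with
    | mem v h => exact hr v h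
    | zero =>
        simp only [Prod.fst_zero, Prod.snd_zero, mul_zero]
        exact M.zero_mem
    | add x y hx hy ihx ihy =>
        have hxy : ((r * (x + y).1, r * (x + y).2) : R × R)
            = (r * x.1, r * x.2) + (r * y.1, r * y.2) := by
          simp [mul_add, Prod.ext_iff]
        rw [hxy]; exact M.add_mem ihx ihy
    | smul c x hx ih =>
        have hcx : ((r * (c • x).1, r * (c • x).2) : R × R) = c • (r * x.1, r * x.2) := by
          simp [Prod.ext_iff, mul_smul_comm]
        rw [hcx]; exact M.smul_mem c ih
  -- right multiplication driver
  have keyR : ∀ r : R, (∀ v ∈ Gen, ((v.1 * r, v.2 * r) : R × R) ∈ M) →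
      ∀ v ∈ M, ((v.1 * r, v.2 * r) : R × R) ∈ M := by
    intro r hr v hv
    rw [hMdef] at hv
    induction hv using Submodule.span_induction with
    | mem v h => exact hr v h
    | zero =>
        simp only [Prod.fst_zero, Prod.snd_zero, zero_mul]
        exact M.zero_mem
    | add x y hx hy ihx ihy =>
        have hxy : (((x + y).1 * r, (x + y).2 * r) : R × R)
            = (x.1 * r, x.2 * r) + (y.1 * r, y.2 * r) := by
          simp [add_mul, Prod.ext_iff]
        rw [hxy]; exact M.add_mem ihx ihy
    | smul c x hx ih =>
        have hcx : (((c • x).1 * r, (c • x).2 * r) : R × R) = c • (x.1 * r, x.2 * r) := by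
          simp [Prod.ext_iff, smul_mul_assoc]
        rw [hcx]; exact M.smul_mem c ih
  -- stability under left multiplication by e
  have stabL_e : ∀ v ∈ M, ((e * v.1, e * v.2) : R × R) ∈ M := by
    refine keyL e ?_
    intro v hvG
    simp only [hGenDef, Set.mem_union, Set.mem_setOf_eq] at hvG
    rcases hvG with ((((⟨y, hy, rfl⟩ | ⟨u, hu, rfl⟩) | ⟨y, hy, w, hw, rfl⟩) |
      ⟨p, hpm, u, hu, rfl⟩) | ⟨u, hu, p, hpm, rfl⟩) | ⟨w, hw, y, hy, rfl⟩
    · show ((e * y, e * hp y) : R × R) ∈ M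
      rw [auxP_em he (hIpP hy), auxP_em he (hhpP y hy)]
      exact hG1 y hy
    · show ((e * u, e * hm u) : R × R) ∈ M
      rw [auxM_em he (hImM hu), auxM_em he (hhmM u hu)]
      exact M.zero_mem
    · show ((e * (y * w), e * (hp y * w)) : R × R) ∈ M
      rw [← mul_assoc, ← mul_assoc, auxP_em he (hIpP hy), auxP_em he (hhpP y hy)]
      exact hG3 y hy w hw
    · show ((e * (p * u), e * (p * hm u)) : R × R) ∈ M
      rw [← mul_assoc, ← mul_assoc, auxP_em he hpm]
      exact hG4 p hpm u hu
    · show ((e * (u * p), e * (hm u * p)) : R × R) ∈ M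
      rw [← mul_assoc, ← mul_assoc, auxM_em he (hImM hu), auxM_em he (hhmM u hu),
        zero_mul]
      exact M.zero_mem
    · show ((e * (w * y), e * (w * hp y)) : R × R) ∈ M
      rw [← mul_assoc, ← mul_assoc, auxM_em he hw, zero_mul, zero_mul]
      exact M.zero_mem
  -- stability under left multiplication by elements of A⁺
  have stabL_p : ∀ p₀ ∈ peirceP e, ∀ v ∈ M, ((p₀ * v.1, p₀ * v.2) : R × R) ∈ M := by
    intro p₀ hp₀
    refine keyL p₀ ?_
    intro v hvG
    simp only [hGenDef, Set.mem_union, Set.mem_setOf_eq] at hvG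
    rcases hvG with ((((⟨y, hy, rfl⟩ | ⟨u, hu, rfl⟩) | ⟨y, hy, w, hw, rfl⟩) |
      ⟨p, hpm, u, hu, rfl⟩) | ⟨u, hu, p, hpm, rfl⟩) | ⟨w, hw, y, hy, rfl⟩
    · show ((p₀ * y, p₀ * hp y) : R × R) ∈ M
      rw [auxPP he hp₀ (hIpP hy), auxPP he hp₀ (hhpP y hy)]
      exact M.zero_mem
    · exact hG4 p₀ hp₀ u hu
    · show ((p₀ * (y * w), p₀ * (hp y * w)) : R × R) ∈ M
      rw [← mul_assoc, ← mul_assoc, auxPP he hp₀ (hIpP hy), auxPP he hp₀ (hhpP y hy),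
        zero_mul]
      exact M.zero_mem
    · show ((p₀ * (p * u), p₀ * (p * hm u)) : R × R) ∈ M
      rw [← mul_assoc, ← mul_assoc, auxPP he hp₀ hpm, zero_mul, zero_mul]
      exact M.zero_mem
    · show ((p₀ * (u * p), p₀ * (hm u * p)) : R × R) ∈ M
      rw [← mul_assoc, ← mul_assoc, ← hh7 p₀ hp₀ u hu p hpm]
      exact hG1 _ (hc5 p₀ hp₀ u hu p hpm)
    · show ((p₀ * (w * y), p₀ * (w * hp y)) : R × R) ∈ M
      rw [← mul_assoc, ← mul_assoc, ← hh9 p₀ hp₀ w hw y hy]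
      exact hG1 _ (hc3 p₀ hp₀ w hw y hy)
  -- stability under left multiplication by elements of A⁻
  have stabL_m : ∀ w₀ ∈ peirceM e, ∀ v ∈ M, ((w₀ * v.1, w₀ * v.2) : R × R) ∈ M := by
    intro w₀ hw₀
    refine keyL w₀ ?_
    intro v hvG
    simp only [hGenDef, Set.mem_union, Set.mem_setOf_eq] at hvG
    rcases hvG with ((((⟨y, hy, rfl⟩ | ⟨u, hu, rfl⟩) | ⟨y, hy, w, hw, rfl⟩) |
      ⟨p, hpm, u, hu, rfl⟩) | ⟨u, hu, p, hpm, rfl⟩) | ⟨w, hw, y, hy, rfl⟩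
    · exact hG6 w₀ hw₀ y hy
    · show ((w₀ * u, w₀ * hm u) : R × R) ∈ M
      rw [auxMM he hw₀ (hImM hu), auxMM he hw₀ (hhmM u hu)]
      exact M.zero_mem
    · show ((w₀ * (y * w), w₀ * (hp y * w)) : R × R) ∈ M
      rw [← mul_assoc, ← mul_assoc, ← hh10 w₀ hw₀ y hy w hw]
      exact hG2 _ (hc8 w₀ hw₀ y hy w hw)
    · show ((w₀ * (p * u), w₀ * (p * hm u)) : R × R) ∈ M
      rw [← mul_assoc, ← mul_assoc, ← hh12 w₀ hw₀ p hpm u hu]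
      exact hG2 _ (hc6 w₀ hw₀ p hpm u hu)
    · show ((w₀ * (u * p), w₀ * (hm u * p)) : R × R) ∈ M
      rw [← mul_assoc, ← mul_assoc, auxMM he hw₀ (hImM hu), auxMM he hw₀ (hhmM u hu),
        zero_mul]
      exact M.zero_mem
    · show ((w₀ * (w * y), w₀ * (w * hp y)) : R × R) ∈ M
      rw [← mul_assoc, ← mul_assoc, auxMM he hw₀ hw, zero_mul, zero_mul]
      exact M.zero_mem
  -- stability under left multiplication by elements of eRe
  have stabL_ee : ∀ s : R, e * s * e = s → ∀ v ∈ M, ((s * v.1, s * v.2) : R × R) ∈ M := by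
    intro s hs v hv
    have hs' : s ∈ Submodule.span Φ
        (insert e {z : R | ∃ p ∈ peirceP e, ∃ q ∈ peirceM e, z = p * q}) := by
      have h0 : s ∈ {x : R | e * x * e = x} := hs
      rw [htight_e] at h0
      exact h0
    clear hs
    induction hs' using Submodule.span_induction with
    | mem s hsmem =>
        simp only [Set.mem_insert_iff, Set.mem_setOf_eq] at hsmem
        rcases hsmem with rfl | ⟨p, hpm, q, hq, rfl⟩
        · exact stabL_e v hv
        · have h1 := stabL_m q hq v hv
          have h2 := stabL_p p hpm _ h1
          rw [mul_assoc, mul_assoc]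
          exact h2
    | zero =>
        rw [zero_mul, zero_mul]
        exact M.zero_mem
    | add s t hsm htm ihs iht =>
        have hst : (((s + t) * v.1, (s + t) * v.2) : R × R)
            = (s * v.1, s * v.2) + (t * v.1, t * v.2) := by
          simp [add_mul, Prod.ext_iff]
        rw [hst]; exact M.add_mem ihs iht
    | smul c s hsm ih =>
        have hcs : (((c • s) * v.1, (c • s) * v.2) : R × R) = c • (s * v.1, s * v.2) := by
          simp [Prod.ext_iff, smul_mul_assoc]
        rw [hcs]; exact M.smul_mem c ih
  -- stability under left multiplication by elements of gRg
  have stabL_gg : ∀ s : R, (1 - e) * s * (1 - e) = s →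
      ∀ v ∈ M, ((s * v.1, s * v.2) : R × R) ∈ M := by
    intro s hs v hv
    have hs' : s ∈ Submodule.span Φ
        (insert (1 - e) {z : R | ∃ p ∈ peirceM e, ∃ q ∈ peirceP e, z = p * q}) := by
      have h0 : s ∈ {x : R | (1 - e) * x * (1 - e) = x} := hs
      rw [htight_g] at h0
      exact h0
    clear hs
    induction hs' using Submodule.span_induction with
    | mem s hsmem =>
        simp only [Set.mem_insert_iff, Set.mem_setOf_eq] at hsmem
        rcases hsmem with rfl | ⟨q, hq, p, hpm, rfl⟩
        · have hsub : (((1 - e) * v.1, (1 - e) * v.2) : R × R)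
              = (v.1, v.2) - (e * v.1, e * v.2) := by
            simp [sub_mul, Prod.ext_iff]
          rw [hsub]
          exact M.sub_mem hv (stabL_e v hv)
        · have h1 := stabL_p p hpm v hv
          have h2 := stabL_m q hq _ h1
          rw [mul_assoc, mul_assoc]
          exact h2
    | zero =>
        rw [zero_mul, zero_mul]
        exact M.zero_mem
    | add s t hsm htm ihs iht =>
        have hst : (((s + t) * v.1, (s + t) * v.2) : R × R)
            = (s * v.1, s * v.2) + (t * v.1, t * v.2) := by
          simp [add_mul, Prod.ext_iff]
        rw [hst]; exact M.add_mem ihs iht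
    | smul c s hsm ih =>
        have hcs : (((c • s) * v.1, (c • s) * v.2) : R × R) = c • (s * v.1, s * v.2) := by
          simp [Prod.ext_iff, smul_mul_assoc]
        rw [hcs]; exact M.smul_mem c ih
  -- full left stability
  have stabL : ∀ r : R, ∀ v ∈ M, ((r * v.1, r * v.2) : R × R) ∈ M := by
    intro r v hv
    have h1 := stabL_ee (e * r * e) (aux_ee he r) v hv
    have h2 := stabL_p (e * r * (1 - e)) (memP_erg he r) v hv
    have h3 := stabL_m ((1 - e) * r * e) (memM_gre he r) v hv
    have h4 := stabL_gg ((1 - e) * r * (1 - e)) (aux_gg' he r) v hv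
    have hsum : ((r * v.1, r * v.2) : R × R) =
        (e * r * e * v.1, e * r * e * v.2) + (e * r * (1 - e) * v.1, e * r * (1 - e) * v.2) +
        ((1 - e) * r * e * v.1, (1 - e) * r * e * v.2) +
        ((1 - e) * r * (1 - e) * v.1, (1 - e) * r * (1 - e) * v.2) := by
      simp only [Prod.mk_add_mk, Prod.mk.injEq]
      constructor <;> noncomm_ring
    rw [hsum]
    exact M.add_mem (M.add_mem (M.add_mem h1 h2) h3) h4
  -- stability under right multiplication by e
  have stabR_e : ∀ v ∈ M, ((v.1 * e, v.2 * e) : R × R) ∈ M := by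
    refine keyR e ?_
    intro v hvG
    simp only [hGenDef, Set.mem_union, Set.mem_setOf_eq] at hvG
    rcases hvG with ((((⟨y, hy, rfl⟩ | ⟨u, hu, rfl⟩) | ⟨y, hy, w, hw, rfl⟩) |
      ⟨p, hpm, u, hu, rfl⟩) | ⟨u, hu, p, hpm, rfl⟩) | ⟨w, hw, y, hy, rfl⟩
    · show ((y * e, hp y * e) : R × R) ∈ M
      rw [auxP_me he (hIpP hy), auxP_me he (hhpP y hy)]
      exact M.zero_mem
    · show ((u * e, hm u * e) : R × R) ∈ M
      rw [auxM_me he (hImM hu), auxM_me he (hhmM u hu)]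
      exact hG2 u hu
    · show ((y * w * e, hp y * w * e) : R × R) ∈ M
      rw [mul_assoc, auxM_me he hw, mul_assoc (hp y), auxM_me he hw]
      exact hG3 y hy w hw
    · show ((p * u * e, p * hm u * e) : R × R) ∈ M
      rw [mul_assoc, auxM_me he (hImM hu), mul_assoc, auxM_me he (hhmM u hu)]
      exact hG4 p hpm u hu
    · show ((u * p * e, hm u * p * e) : R × R) ∈ M
      rw [mul_assoc, auxP_me he hpm, mul_zero, mul_assoc, auxP_me he hpm, mul_zero]
      exact M.zero_mem
    · show ((w * y * e, w * hp y * e) : R × R) ∈ M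
      rw [mul_assoc, auxP_me he (hIpP hy), mul_zero, mul_assoc, auxP_me he (hhpP y hy), mul_zero]
      exact M.zero_mem
  -- stability under right multiplication by elements of A⁺
  have stabR_p : ∀ p₀ ∈ peirceP e, ∀ v ∈ M, ((v.1 * p₀, v.2 * p₀) : R × R) ∈ M := by
    intro p₀ hp₀
    refine keyR p₀ ?_
    intro v hvG
    simp only [hGenDef, Set.mem_union, Set.mem_setOf_eq] at hvG
    rcases hvG with ((((⟨y, hy, rfl⟩ | ⟨u, hu, rfl⟩) | ⟨y, hy, w, hw, rfl⟩) |
      ⟨p, hpm, u, hu, rfl⟩) | ⟨u, hu, p, hpm, rfl⟩) | ⟨w, hw, y, hy, rfl⟩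
    · show ((y * p₀, hp y * p₀) : R × R) ∈ M
      rw [auxPP he (hIpP hy) hp₀, auxPP he (hhpP y hy) hp₀]
      exact M.zero_mem
    · exact hG5 u hu p₀ hp₀
    · show ((y * w * p₀, hp y * w * p₀) : R × R) ∈ M
      rw [← hh8 y hy w hw p₀ hp₀]
      exact hG1 _ (hc4 y hy w hw p₀ hp₀)
    · show ((p * u * p₀, p * hm u * p₀) : R × R) ∈ M
      rw [← hh7 p hpm u hu p₀ hp₀]
      exact hG1 _ (hc5 p hpm u hu p₀ hp₀)
    · show ((u * p * p₀, hm u * p * p₀) : R × R) ∈ M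
      rw [mul_assoc, auxPP he hpm hp₀, mul_zero, mul_assoc, auxPP he hpm hp₀, mul_zero]
      exact M.zero_mem
    · show ((w * y * p₀, w * hp y * p₀) : R × R) ∈ M
      rw [mul_assoc, auxPP he (hIpP hy) hp₀, mul_zero, mul_assoc,
        auxPP he (hhpP y hy) hp₀, mul_zero]
      exact M.zero_mem
  -- stability under right multiplication by elements of A⁻
  have stabR_m : ∀ w₀ ∈ peirceM e, ∀ v ∈ M, ((v.1 * w₀, v.2 * w₀) : R × R) ∈ M := by
    intro w₀ hw₀
    refine keyR w₀ ?_
    intro v hvG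
    simp only [hGenDef, Set.mem_union, Set.mem_setOf_eq] at hvG
    rcases hvG with ((((⟨y, hy, rfl⟩ | ⟨u, hu, rfl⟩) | ⟨y, hy, w, hw, rfl⟩) |
      ⟨p, hpm, u, hu, rfl⟩) | ⟨u, hu, p, hpm, rfl⟩) | ⟨w, hw, y, hy, rfl⟩
    · exact hG3 y hy w₀ hw₀
    · show ((u * w₀, hm u * w₀) : R × R) ∈ M
      rw [auxMM he (hImM hu) hw₀, auxMM he (hhmM u hu) hw₀]
      exact M.zero_mem
    · show ((y * w * w₀, hp y * w * w₀) : R × R) ∈ M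
      rw [mul_assoc, auxMM he hw hw₀, mul_zero, mul_assoc, auxMM he hw hw₀, mul_zero]
      exact M.zero_mem
    · show ((p * u * w₀, p * hm u * w₀) : R × R) ∈ M
      rw [mul_assoc, auxMM he (hImM hu) hw₀, mul_zero, mul_assoc,
        auxMM he (hhmM u hu) hw₀, mul_zero]
      exact M.zero_mem
    · show ((u * p * w₀, hm u * p * w₀) : R × R) ∈ M
      rw [← hh11 u hu p hpm w₀ hw₀]
      exact hG2 _ (hc7 u hu p hpm w₀ hw₀)
    · show ((w * y * w₀, w * hp y * w₀) : R × R) ∈ M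
      rw [← hh10 w hw y hy w₀ hw₀]
      exact hG2 _ (hc8 w hw y hy w₀ hw₀)
  -- stability under right multiplication by elements of eRe
  have stabR_ee : ∀ s : R, e * s * e = s → ∀ v ∈ M, ((v.1 * s, v.2 * s) : R × R) ∈ M := by
    intro s hs v hv
    have hs' : s ∈ Submodule.span Φ
        (insert e {z : R | ∃ p ∈ peirceP e, ∃ q ∈ peirceM e, z = p * q}) := by
      have h0 : s ∈ {x : R | e * x * e = x} := hs
      rw [htight_e] at h0
      exact h0
    clear hs
    induction hs' using Submodule.span_induction with
    | mem s hsmem =>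
        simp only [Set.mem_insert_iff, Set.mem_setOf_eq] at hsmem
        rcases hsmem with rfl | ⟨p, hpm, q, hq, rfl⟩
        · exact stabR_e v hv
        · have h1 := stabR_p p hpm v hv
          have h2 := stabR_m q hq _ h1
          rw [← mul_assoc, ← mul_assoc]
          exact h2
    | zero =>
        rw [mul_zero, mul_zero]
        exact M.zero_mem
    | add s t hsm htm ihs iht =>
        have hst : ((v.1 * (s + t), v.2 * (s + t)) : R × R)
            = (v.1 * s, v.2 * s) + (v.1 * t, v.2 * t) := by
          simp [mul_add, Prod.ext_iff]
        rw [hst]; exact M.add_mem ihs iht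
    | smul c s hsm ih =>
        have hcs : ((v.1 * (c • s), v.2 * (c • s)) : R × R) = c • (v.1 * s, v.2 * s) := by
          simp [Prod.ext_iff, mul_smul_comm]
        rw [hcs]; exact M.smul_mem c ih
  -- stability under right multiplication by elements of gRg
  have stabR_gg : ∀ s : R, (1 - e) * s * (1 - e) = s →
      ∀ v ∈ M, ((v.1 * s, v.2 * s) : R × R) ∈ M := by
    intro s hs v hv
    have hs' : s ∈ Submodule.span Φ
        (insert (1 - e) {z : R | ∃ p ∈ peirceM e, ∃ q ∈ peirceP e, z = p * q}) := by
      have h0 : s ∈ {x : R | (1 - e) * x * (1 - e) = x} := hs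
      rw [htight_g] at h0
      exact h0
    clear hs
    induction hs' using Submodule.span_induction with
    | mem s hsmem =>
        simp only [Set.mem_insert_iff, Set.mem_setOf_eq] at hsmem
        rcases hsmem with rfl | ⟨q, hq, p, hpm, rfl⟩
        · have hsub : ((v.1 * (1 - e), v.2 * (1 - e)) : R × R)
              = (v.1, v.2) - (v.1 * e, v.2 * e) := by
            simp [mul_sub, Prod.ext_iff]
          rw [hsub]
          exact M.sub_mem hv (stabR_e v hv)
        · have h1 := stabR_m q hq v hv
          have h2 := stabR_p p hpm _ h1
          rw [← mul_assoc, ← mul_assoc]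
          exact h2
    | zero =>
        rw [mul_zero, mul_zero]
        exact M.zero_mem
    | add s t hsm htm ihs iht =>
        have hst : ((v.1 * (s + t), v.2 * (s + t)) : R × R)
            = (v.1 * s, v.2 * s) + (v.1 * t, v.2 * t) := by
          simp [mul_add, Prod.ext_iff]
        rw [hst]; exact M.add_mem ihs iht
    | smul c s hsm ih =>
        have hcs : ((v.1 * (c • s), v.2 * (c • s)) : R × R) = c • (v.1 * s, v.2 * s) := by
          simp [Prod.ext_iff, mul_smul_comm]
        rw [hcs]; exact M.smul_mem c ih
  -- full right stability
  have stabR : ∀ r : R, ∀ v ∈ M, ((v.1 * r, v.2 * r) : R × R) ∈ M := by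
    intro r v hv
    have h1 := stabR_ee (e * r * e) (aux_ee he r) v hv
    have h2 := stabR_p (e * r * (1 - e)) (memP_erg he r) v hv
    have h3 := stabR_m ((1 - e) * r * e) (memM_gre he r) v hv
    have h4 := stabR_gg ((1 - e) * r * (1 - e)) (aux_gg' he r) v hv
    have hsum : ((v.1 * r, v.2 * r) : R × R) =
        (v.1 * (e * r * e), v.2 * (e * r * e)) +
        (v.1 * (e * r * (1 - e)), v.2 * (e * r * (1 - e))) +
        (v.1 * ((1 - e) * r * e), v.2 * ((1 - e) * r * e)) +
        (v.1 * ((1 - e) * r * (1 - e)), v.2 * ((1 - e) * r * (1 - e))) := by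
      simp only [Prod.mk_add_mk, Prod.mk.injEq]
      constructor <;> noncomm_ring
    rw [hsum]
    exact M.add_mem (M.add_mem (M.add_mem h1 h2) h3) h4
  -- the key structural predicate on members of M
  have hPmem : ∀ v ∈ M,
      e * v.1 * (1 - e) ∈ Ip ∧ (1 - e) * v.1 * e ∈ Im ∧
      e * v.2 * (1 - e) = hp (e * v.1 * (1 - e)) ∧
      (1 - e) * v.2 * e = hm ((1 - e) * v.1 * e) ∧
      (∀ r ∈ peirceP e, e * v.1 * e * r ∈ Ip ∧ e * v.2 * e * r = hp (e * v.1 * e * r)) ∧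
      (∀ r ∈ peirceM e, (1 - e) * v.1 * (1 - e) * r ∈ Im ∧
        (1 - e) * v.2 * (1 - e) * r = hm ((1 - e) * v.1 * (1 - e) * r)) := by
    intro v hv
    rw [hMdef] at hv
    induction hv using Submodule.span_induction with
    | mem v hvG =>
        simp only [hGenDef, Set.mem_union, Set.mem_setOf_eq] at hvG
        rcases hvG with ((((⟨y, hy, rfl⟩ | ⟨u, hu, rfl⟩) | ⟨y, hy, w, hw, rfl⟩) |
          ⟨p, hpm, u, hu, rfl⟩) | ⟨u, hu, p, hpm, rfl⟩) | ⟨w, hw, y, hy, rfl⟩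
        · -- G1 : (y, hp y)
          have h1 : e * y * (1 - e) = y := hIpP hy
          have h2 : e * hp y * (1 - e) = hp y := hhpP y hy
          have h3 : (1 - e) * y * e = 0 := by rw [auxP_gm he (hIpP hy), zero_mul]
          have h4 : (1 - e) * hp y * e = 0 := by rw [auxP_gm he (hhpP y hy), zero_mul]
          have h5 : e * y * e = 0 := by rw [mul_assoc, auxP_me he (hIpP hy), mul_zero]
          have h6 : e * hp y * e = 0 := by rw [mul_assoc, auxP_me he (hhpP y hy), mul_zero]
          have h7 : (1 - e) * y * (1 - e) = 0 := by rw [auxP_gm he (hIpP hy), zero_mul]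
          have h8 : (1 - e) * hp y * (1 - e) = 0 := by rw [auxP_gm he (hhpP y hy), zero_mul]
          refine ⟨by rw [h1]; exact hy, by rw [h3]; exact Im.zero_mem,
            by rw [h2, h1], by rw [h4, h3, hm0], fun r hr => ?_, fun r hr => ?_⟩
          · exact ⟨by rw [h5, zero_mul]; exact Ip.zero_mem,
              by rw [h6, h5, zero_mul, hp0]⟩
          · exact ⟨by rw [h7, zero_mul]; exact Im.zero_mem,
              by rw [h8, h7, zero_mul, hm0]⟩
        · -- G2 : (u, hm u)
          have h1 : (1 - e) * u * e = u := hImM hu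
          have h2 : (1 - e) * hm u * e = hm u := hhmM u hu
          have h3 : e * u * (1 - e) = 0 := by rw [auxM_em he (hImM hu), zero_mul]
          have h4 : e * hm u * (1 - e) = 0 := by rw [auxM_em he (hhmM u hu), zero_mul]
          have h5 : e * u * e = 0 := by rw [auxM_em he (hImM hu), zero_mul]
          have h6 : e * hm u * e = 0 := by rw [auxM_em he (hhmM u hu), zero_mul]
          have h7 : (1 - e) * u * (1 - e) = 0 := by
            rw [mul_assoc, auxM_mg he (hImM hu), mul_zero]
          have h8 : (1 - e) * hm u * (1 - e) = 0 := by
            rw [mul_assoc, auxM_mg he (hhmM u hu), mul_zero]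
          refine ⟨by rw [h3]; exact Ip.zero_mem, by rw [h1]; exact hu,
            by rw [h4, h3, hp0], by rw [h2, h1], fun r hr => ?_, fun r hr => ?_⟩
          · exact ⟨by rw [h5, zero_mul]; exact Ip.zero_mem,
              by rw [h6, h5, zero_mul, hp0]⟩
          · exact ⟨by rw [h7, zero_mul]; exact Im.zero_mem,
              by rw [h8, h7, zero_mul, hm0]⟩
        · -- G3 : (y * w, hp y * w)
          have a1 : e * (y * w) * (1 - e) = 0 := by
            rw [← mul_assoc, auxP_em he (hIpP hy), mul_assoc, auxM_mg he hw, mul_zero]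
          have a1' : e * (hp y * w) * (1 - e) = 0 := by
            rw [← mul_assoc, auxP_em he (hhpP y hy), mul_assoc, auxM_mg he hw, mul_zero]
          have a2 : (1 - e) * (y * w) * e = 0 := by
            rw [← mul_assoc, auxP_gm he (hIpP hy), zero_mul, zero_mul]
          have a2' : (1 - e) * (hp y * w) * e = 0 := by
            rw [← mul_assoc, auxP_gm he (hhpP y hy), zero_mul, zero_mul]
          have a3 : e * (y * w) * e = y * w := by
            rw [← mul_assoc, auxP_em he (hIpP hy), mul_assoc, auxM_me he hw]
          have a3' : e * (hp y * w) * e = hp y * w := by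
            rw [← mul_assoc, auxP_em he (hhpP y hy), mul_assoc, auxM_me he hw]
          have a4 : (1 - e) * (y * w) * (1 - e) = 0 := by
            rw [← mul_assoc, auxP_gm he (hIpP hy), zero_mul, zero_mul]
          have a4' : (1 - e) * (hp y * w) * (1 - e) = 0 := by
            rw [← mul_assoc, auxP_gm he (hhpP y hy), zero_mul, zero_mul]
          refine ⟨by rw [a1]; exact Ip.zero_mem, by rw [a2]; exact Im.zero_mem,
            by rw [a1', a1, hp0], by rw [a2', a2, hm0], fun r hr => ?_, fun r hr => ?_⟩
          · exact ⟨by rw [a3]; exact hc4 y hy w hw r hr,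
              by rw [a3', a3, hh8 y hy w hw r hr]⟩
          · exact ⟨by rw [a4, zero_mul]; exact Im.zero_mem,
              by rw [a4', a4, zero_mul, hm0]⟩
        · -- G4 : (p * u, p * hm u)
          have b1 : e * (p * u) * (1 - e) = 0 := by
            rw [← mul_assoc, auxP_em he hpm, mul_assoc, auxM_mg he (hImM hu), mul_zero]
          have b1' : e * (p * hm u) * (1 - e) = 0 := by
            rw [← mul_assoc, auxP_em he hpm, mul_assoc, auxM_mg he (hhmM u hu), mul_zero]
          have b2 : (1 - e) * (p * u) * e = 0 := by
            rw [← mul_assoc, auxP_gm he hpm, zero_mul, zero_mul]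
          have b2' : (1 - e) * (p * hm u) * e = 0 := by
            rw [← mul_assoc, auxP_gm he hpm, zero_mul, zero_mul]
          have b3 : e * (p * u) * e = p * u := by
            rw [← mul_assoc, auxP_em he hpm, mul_assoc, auxM_me he (hImM hu)]
          have b3' : e * (p * hm u) * e = p * hm u := by
            rw [← mul_assoc, auxP_em he hpm, mul_assoc, auxM_me he (hhmM u hu)]
          have b4 : (1 - e) * (p * u) * (1 - e) = 0 := by
            rw [← mul_assoc, auxP_gm he hpm, zero_mul, zero_mul]
          have b4' : (1 - e) * (p * hm u) * (1 - e) = 0 := by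
            rw [← mul_assoc, auxP_gm he hpm, zero_mul, zero_mul]
          refine ⟨by rw [b1]; exact Ip.zero_mem, by rw [b2]; exact Im.zero_mem,
            by rw [b1', b1, hp0], by rw [b2', b2, hm0], fun r hr => ?_, fun r hr => ?_⟩
          · exact ⟨by rw [b3]; exact hc5 p hpm u hu r hr,
              by rw [b3', b3, hh7 p hpm u hu r hr]⟩
          · exact ⟨by rw [b4, zero_mul]; exact Im.zero_mem,
              by rw [b4', b4, zero_mul, hm0]⟩
        · -- G5 : (u * p, hm u * p)
          have c1 : e * (u * p) * (1 - e) = 0 := by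
            rw [← mul_assoc, auxM_em he (hImM hu), zero_mul, zero_mul]
          have c1' : e * (hm u * p) * (1 - e) = 0 := by
            rw [← mul_assoc, auxM_em he (hhmM u hu), zero_mul, zero_mul]
          have c2 : (1 - e) * (u * p) * e = 0 := by
            rw [← mul_assoc, auxM_gm he (hImM hu), mul_assoc, auxP_me he hpm, mul_zero]
          have c2' : (1 - e) * (hm u * p) * e = 0 := by
            rw [← mul_assoc, auxM_gm he (hhmM u hu), mul_assoc, auxP_me he hpm, mul_zero]
          have c3 : (1 - e) * (u * p) * (1 - e) = u * p := by
            rw [← mul_assoc, auxM_gm he (hImM hu), mul_assoc, auxP_mg he hpm]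
          have c3' : (1 - e) * (hm u * p) * (1 - e) = hm u * p := by
            rw [← mul_assoc, auxM_gm he (hhmM u hu), mul_assoc, auxP_mg he hpm]
          have c4 : e * (u * p) * e = 0 := by
            rw [← mul_assoc, auxM_em he (hImM hu), zero_mul, zero_mul]
          have c4' : e * (hm u * p) * e = 0 := by
            rw [← mul_assoc, auxM_em he (hhmM u hu), zero_mul, zero_mul]
          refine ⟨by rw [c1]; exact Ip.zero_mem, by rw [c2]; exact Im.zero_mem,
            by rw [c1', c1, hp0], by rw [c2', c2, hm0], fun r hr => ?_, fun r hr => ?_⟩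
          · exact ⟨by rw [c4, zero_mul]; exact Ip.zero_mem,
              by rw [c4', c4, zero_mul, hp0]⟩
          · exact ⟨by rw [c3]; exact hc7 u hu p hpm r hr,
              by rw [c3', c3, hh11 u hu p hpm r hr]⟩
        · -- G6 : (w * y, w * hp y)
          have d1 : e * (w * y) * (1 - e) = 0 := by
            rw [← mul_assoc, auxM_em he hw, zero_mul, zero_mul]
          have d1' : e * (w * hp y) * (1 - e) = 0 := by
            rw [← mul_assoc, auxM_em he hw, zero_mul, zero_mul]
          have d2 : (1 - e) * (w * y) * e = 0 := by
            rw [← mul_assoc, auxM_gm he hw, mul_assoc, auxP_me he (hIpP hy), mul_zero]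
          have d2' : (1 - e) * (w * hp y) * e = 0 := by
            rw [← mul_assoc, auxM_gm he hw, mul_assoc, auxP_me he (hhpP y hy), mul_zero]
          have d3 : (1 - e) * (w * y) * (1 - e) = w * y := by
            rw [← mul_assoc, auxM_gm he hw, mul_assoc, auxP_mg he (hIpP hy)]
          have d3' : (1 - e) * (w * hp y) * (1 - e) = w * hp y := by
            rw [← mul_assoc, auxM_gm he hw, mul_assoc, auxP_mg he (hhpP y hy)]
          have d4 : e * (w * y) * e = 0 := by
            rw [← mul_assoc, auxM_em he hw, zero_mul, zero_mul]
          have d4' : e * (w * hp y) * e = 0 := by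
            rw [← mul_assoc, auxM_em he hw, zero_mul, zero_mul]
          refine ⟨by rw [d1]; exact Ip.zero_mem, by rw [d2]; exact Im.zero_mem,
            by rw [d1', d1, hp0], by rw [d2', d2, hm0], fun r hr => ?_, fun r hr => ?_⟩
          · exact ⟨by rw [d4, zero_mul]; exact Ip.zero_mem,
              by rw [d4', d4, zero_mul, hp0]⟩
          · exact ⟨by rw [d3]; exact hc8 w hw y hy r hr,
              by rw [d3', d3, hh10 w hw y hy r hr]⟩
    | zero =>
        simp only [Prod.fst_zero, Prod.snd_zero, mul_zero, zero_mul, hp0, hm0]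
        exact ⟨Ip.zero_mem, Im.zero_mem, trivial, trivial,
          fun r hr => ⟨Ip.zero_mem, trivial⟩, fun r hr => ⟨Im.zero_mem, trivial⟩⟩
    | add x y hx hy ihx ihy =>
        obtain ⟨ix1, ix2, ix3, ix4, ix5, ix6⟩ := ihx
        obtain ⟨iy1, iy2, iy3, iy4, iy5, iy6⟩ := ihy
        have e1 : e * (x + y).1 * (1 - e) = e * x.1 * (1 - e) + e * y.1 * (1 - e) := by
          simp [mul_add, add_mul]
        have e2 : (1 - e) * (x + y).1 * e = (1 - e) * x.1 * e + (1 - e) * y.1 * e := by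
          simp [mul_add, add_mul]
        have e3 : e * (x + y).2 * (1 - e) = e * x.2 * (1 - e) + e * y.2 * (1 - e) := by
          simp [mul_add, add_mul]
        have e4 : (1 - e) * (x + y).2 * e = (1 - e) * x.2 * e + (1 - e) * y.2 * e := by
          simp [mul_add, add_mul]
        refine ⟨by rw [e1]; exact Ip.add_mem ix1 iy1, by rw [e2]; exact Im.add_mem ix2 iy2,
          by rw [e3, e1, ix3, iy3, hpadd _ ix1 _ iy1],
          by rw [e4, e2, ix4, iy4, hmadd _ ix2 _ iy2], fun r hr => ?_, fun r hr => ?_⟩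
        · obtain ⟨m1, q1⟩ := ix5 r hr
          obtain ⟨m2, q2⟩ := iy5 r hr
          have e5 : e * (x + y).1 * e * r = e * x.1 * e * r + e * y.1 * e * r := by
            simp [mul_add, add_mul]
          have e5' : e * (x + y).2 * e * r = e * x.2 * e * r + e * y.2 * e * r := by
            simp [mul_add, add_mul]
          exact ⟨by rw [e5]; exact Ip.add_mem m1 m2,
            by rw [e5', e5, q1, q2, hpadd _ m1 _ m2]⟩
        · obtain ⟨m1, q1⟩ := ix6 r hr
          obtain ⟨m2, q2⟩ := iy6 r hr
          have e6 : (1 - e) * (x + y).1 * (1 - e) * r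
              = (1 - e) * x.1 * (1 - e) * r + (1 - e) * y.1 * (1 - e) * r := by
            simp [mul_add, add_mul]
          have e6' : (1 - e) * (x + y).2 * (1 - e) * r
              = (1 - e) * x.2 * (1 - e) * r + (1 - e) * y.2 * (1 - e) * r := by
            simp [mul_add, add_mul]
          exact ⟨by rw [e6]; exact Im.add_mem m1 m2,
            by rw [e6', e6, q1, q2, hmadd _ m1 _ m2]⟩
    | smul c x hx ih =>
        obtain ⟨i1, i2, i3, i4, i5, i6⟩ := ih
        have e1 : e * (c • x).1 * (1 - e) = c • (e * x.1 * (1 - e)) := by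
          simp [mul_smul_comm, smul_mul_assoc]
        have e2 : (1 - e) * (c • x).1 * e = c • ((1 - e) * x.1 * e) := by
          simp [mul_smul_comm, smul_mul_assoc]
        have e3 : e * (c • x).2 * (1 - e) = c • (e * x.2 * (1 - e)) := by
          simp [mul_smul_comm, smul_mul_assoc]
        have e4 : (1 - e) * (c • x).2 * e = c • ((1 - e) * x.2 * e) := by
          simp [mul_smul_comm, smul_mul_assoc]
        refine ⟨by rw [e1]; exact Ip.smul_mem c i1, by rw [e2]; exact Im.smul_mem c i2,
          by rw [e3, e1, i3, hpsmul c _ i1], by rw [e4, e2, i4, hmsmul c _ i2],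
          fun r hr => ?_, fun r hr => ?_⟩
        · obtain ⟨m1, q1⟩ := i5 r hr
          have e5 : e * (c • x).1 * e * r = c • (e * x.1 * e * r) := by
            simp [mul_smul_comm, smul_mul_assoc]
          have e5' : e * (c • x).2 * e * r = c • (e * x.2 * e * r) := by
            simp [mul_smul_comm, smul_mul_assoc]
          exact ⟨by rw [e5]; exact Ip.smul_mem c m1, by rw [e5', e5, q1, hpsmul c _ m1]⟩
        · obtain ⟨m1, q1⟩ := i6 r hr
          have e6 : (1 - e) * (c • x).1 * (1 - e) * r = c • ((1 - e) * x.1 * (1 - e) * r) := by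
            simp [mul_smul_comm, smul_mul_assoc]
          have e6' : (1 - e) * (c • x).2 * (1 - e) * r = c • ((1 - e) * x.2 * (1 - e) * r) := by
            simp [mul_smul_comm, smul_mul_assoc]
          exact ⟨by rw [e6]; exact Im.smul_mem c m1, by rw [e6', e6, q1, hmsmul c _ m1]⟩
  -- functionality of the graph
  have hfun0 : ∀ z : R, (((0 : R), z) : R × R) ∈ M → z = 0 := by
    intro z hz
    obtain ⟨-, -, h3, h4, h5, h6⟩ := hPmem _ hz
    have hz3 : e * z * (1 - e) = 0 := by
      rw [h3, mul_zero, zero_mul, hp0]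
    have hz4 : (1 - e) * z * e = 0 := by
      rw [h4, mul_zero, zero_mul, hm0]
    have heze : e * z * e = 0 := by
      apply hcorner_e (e * z * e) (aux_ee he z)
      intro r hr
      have := (h5 r hr).2
      rw [mul_zero, zero_mul, zero_mul, hp0] at this
      exact this
    have hgzg : (1 - e) * z * (1 - e) = 0 := by
      apply hcorner_g ((1 - e) * z * (1 - e)) (aux_gg' he z)
      intro r hr
      have := (h6 r hr).2
      rw [mul_zero, zero_mul, zero_mul, hm0] at this
      exact this
    have hdec : z = e * z * e + e * z * (1 - e) + (1 - e) * z * e + (1 - e) * z * (1 - e) := by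
      noncomm_ring
    rw [hdec, heze, hz3, hz4, hgzg]
    simp
  have huniq : ∀ x z z' : R, ((x, z) : R × R) ∈ M → ((x, z') : R × R) ∈ M → z = z' := by
    intro x z z' h1 h2
    have hsub : (((0 : R), z - z') : R × R) ∈ M := by
      have := M.sub_mem h1 h2
      simpa [Prod.mk_sub_mk, sub_self] using this
    exact sub_eq_zero.mp (hfun0 _ hsub)
  -- the extension F
  set F : R → R := fun x => if h : ∃ z, ((x, z) : R × R) ∈ M then h.choose else 0 with hFdef
  have hF : ∀ x z : R, ((x, z) : R × R) ∈ M → F x = z := by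
    intro x z hxz
    have hex : ∃ z, ((x, z) : R × R) ∈ M := ⟨z, hxz⟩
    have h1 : F x = hex.choose := by
      simp only [hFdef]
      exact dif_pos hex
    rw [h1]
    exact huniq x _ z hex.choose_spec hxz
  -- S is contained in the domain of the graph
  have hdom : ∀ x ∈ S, ∃ z : R, ((x, z) : R × R) ∈ M := by
    have hx0 : (0 : R) ∈ {x : R | ∃ z : R, ((x, z) : R × R) ∈ M} := ⟨0, M.zero_mem⟩
    have hxadd : ∀ {a b : R}, a ∈ {x : R | ∃ z : R, ((x, z) : R × R) ∈ M} →
        b ∈ {x : R | ∃ z : R, ((x, z) : R × R) ∈ M} →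
        a + b ∈ {x : R | ∃ z : R, ((x, z) : R × R) ∈ M} := by
      rintro a b ⟨z, hz⟩ ⟨z', hz'⟩
      exact ⟨z + z', by simpa [Prod.mk_add_mk] using M.add_mem hz hz'⟩
    have hxneg : ∀ {a : R}, a ∈ {x : R | ∃ z : R, ((x, z) : R × R) ∈ M} →
        -a ∈ {x : R | ∃ z : R, ((x, z) : R × R) ∈ M} := by
      rintro a ⟨z, hz⟩
      exact ⟨-z, by simpa [Prod.neg_mk] using M.neg_mem hz⟩
    have hxml : ∀ {r a : R}, a ∈ {x : R | ∃ z : R, ((x, z) : R × R) ∈ M} →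
        r * a ∈ {x : R | ∃ z : R, ((x, z) : R × R) ∈ M} := by
      rintro r a ⟨z, hz⟩
      exact ⟨r * z, stabL r (a, z) hz⟩
    have hxmr : ∀ {a r : R}, a ∈ {x : R | ∃ z : R, ((x, z) : R × R) ∈ M} →
        a * r ∈ {x : R | ∃ z : R, ((x, z) : R × R) ∈ M} := by
      rintro a r ⟨z, hz⟩
      exact ⟨z * r, stabR r (a, z) hz⟩
    intro x hx
    have hx' : x ∈ TwoSidedIdeal.span ((Ip : Set R) ∪ (Im : Set R)) := hx
    have := TwoSidedIdeal.mem_span_iff.mp hx'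
      (TwoSidedIdeal.mk' {x : R | ∃ z : R, ((x, z) : R × R) ∈ M}
        hx0 hxadd hxneg hxml hxmr) ?_
    · rwa [TwoSidedIdeal.mem_mk'] at this
    · rintro a (ha | ha)
      · rw [SetLike.mem_coe, TwoSidedIdeal.mem_mk']
        exact ⟨hp a, hG1 a ha⟩
      · rw [SetLike.mem_coe, TwoSidedIdeal.mem_mk']
        exact ⟨hm a, hG2 a ha⟩
  constructor
  · -- existence
    refine ⟨F, ?_, ?_, ?_, ?_, ?_⟩
    · intro x hx y hy
      obtain ⟨z, hz⟩ := hdom x hx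
      obtain ⟨z', hz'⟩ := hdom y hy
      have hxy : ((x + y, z + z') : R × R) ∈ M := by
        simpa [Prod.mk_add_mk] using M.add_mem hz hz'
      rw [hF x z hz, hF y z' hz', hF (x + y) (z + z') hxy]
    · intro r x hx
      obtain ⟨z, hz⟩ := hdom x hx
      rw [hF x z hz, hF (r * x) (r * z) (stabL r (x, z) hz)]
    · intro r x hx
      obtain ⟨z, hz⟩ := hdom x hx
      rw [hF x z hz, hF (x * r) (z * r) (stabR r (x, z) hz)]
    · intro y hy
      exact hF y (hp y) (hG1 y hy)
    · intro u hu
      exact hF u (hm u) (hG2 u hu)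
  · -- uniqueness
    rintro F₁ F₂ ⟨h1a, h1l, h1r, h1p, h1m⟩ ⟨h2a, h2l, h2r, h2p, h2m⟩ x hx
    have hS_Ip : ∀ y ∈ Ip, y ∈ S := fun y hy =>
      TwoSidedIdeal.subset_span (Set.mem_union_left _ hy)
    have hS_Im : ∀ u ∈ Im, u ∈ S := fun u hu =>
      TwoSidedIdeal.subset_span (Set.mem_union_right _ hu)
    have hF₁0 : F₁ 0 = 0 := by
      have := h1l 0 0 S.zero_mem
      simpa using this
    have hF₂0 : F₂ 0 = 0 := by
      have := h2l 0 0 S.zero_mem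
      simpa using this
    have hJ0 : (0 : R) ∈ {a : R | a ∈ S ∧ F₁ a = F₂ a} := ⟨S.zero_mem, by rw [hF₁0, hF₂0]⟩
    have hJadd : ∀ {a b : R}, a ∈ {a : R | a ∈ S ∧ F₁ a = F₂ a} →
        b ∈ {a : R | a ∈ S ∧ F₁ a = F₂ a} → a + b ∈ {a : R | a ∈ S ∧ F₁ a = F₂ a} := by
      rintro a b ⟨haS, ha⟩ ⟨hbS, hb⟩
      exact ⟨S.add_mem haS hbS, by rw [h1a a haS b hbS, h2a a haS b hbS, ha, hb]⟩
    have hJneg : ∀ {a : R}, a ∈ {a : R | a ∈ S ∧ F₁ a = F₂ a} →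
        -a ∈ {a : R | a ∈ S ∧ F₁ a = F₂ a} := by
      rintro a ⟨haS, ha⟩
      refine ⟨S.neg_mem haS, ?_⟩
      rw [show -a = (-1 : R) * a by rw [neg_one_mul], h1l (-1) a haS, h2l (-1) a haS, ha]
    have hJml : ∀ {r a : R}, a ∈ {a : R | a ∈ S ∧ F₁ a = F₂ a} →
        r * a ∈ {a : R | a ∈ S ∧ F₁ a = F₂ a} := by
      rintro r a ⟨haS, ha⟩
      exact ⟨S.mul_mem_left r a haS, by rw [h1l r a haS, h2l r a haS, ha]⟩
    have hJmr : ∀ {a r : R}, a ∈ {a : R | a ∈ S ∧ F₁ a = F₂ a} →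
        a * r ∈ {a : R | a ∈ S ∧ F₁ a = F₂ a} := by
      rintro a r ⟨haS, ha⟩
      exact ⟨S.mul_mem_right a r haS, by rw [h1r r a haS, h2r r a haS, ha]⟩
    have hx' : x ∈ TwoSidedIdeal.span ((Ip : Set R) ∪ (Im : Set R)) := hx
    have := TwoSidedIdeal.mem_span_iff.mp hx'
      (TwoSidedIdeal.mk' {a : R | a ∈ S ∧ F₁ a = F₂ a} hJ0 hJadd hJneg hJml hJmr) ?_
    · rw [TwoSidedIdeal.mem_mk'] at this
      exact this.2
    · rintro a (ha | ha)
      · rw [SetLike.mem_coe, TwoSidedIdeal.mem_mk']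
        exact ⟨hS_Ip a ha, by rw [h1p a ha, h2p a ha]⟩
      · rw [SetLike.mem_coe, TwoSidedIdeal.mem_mk']
        exact ⟨hS_Im a ha, by rw [h1m a ha, h2m a ha]⟩
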